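/- arXiv:1409.5759 — 2 statements merged into one kernel-verified Lean document; each statement's English description precedes it below -/
import Mathlib

section
/- Let V : ℝᵈ → ℝ be smooth with bounded Hessian, and let x(t,y), ξ(t,y) solve the Hamiltonian system ẋ = ξ, ξ̇ = −∇V(x), x(0,y) = y, ξ(0,y) = 0. Then there exists T > 0, depending only on the Hessian bound, such that for each t ∈ [0,T] the map y ↦ x(t,y) is a bijection of ℝᵈ (indeed ‖∇_y x(t,y) − I‖ ≤ 1/2 for all y). -/
open Set Real NNReal

set_option maxHeartbeats 1000000 in
theorem stmt_13 (d : ℕ) (M : ℝ) (hM : 0 ≤ M) :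
    ∃ T > (0:ℝ), ∀ (V : EuclideanSpace ℝ (Fin d) → ℝ)
      (x ξ : ℝ → EuclideanSpace ℝ (Fin d) → EuclideanSpace ℝ (Fin d)),
      ContDiff ℝ (⊤ : ℕ∞) V →
      (∀ y, ‖iteratedFDeriv ℝ 2 V y‖ ≤ M) →
      (∀ y t, HasDerivAt (fun s => x s y) (ξ t y) t) →
      (∀ y t, HasDerivAt (fun s => ξ s y) (-(gradient V (x t y))) t) →
      (∀ y, x 0 y = y) → (∀ y, ξ 0 y = 0) →
      ∀ t ∈ Set.Icc (0:ℝ) T, Function.Bijective (fun y => x t y) := by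
  classical
  set K : ℝ := max 1 M with hKdef
  have hK1 : (1:ℝ) ≤ K := le_max_left _ _
  have hMK : M ≤ K := le_max_right _ _
  have hK0 : (0:ℝ) < K := lt_of_lt_of_le one_pos hK1
  refine ⟨Real.log (3/2) / K, div_pos (Real.log_pos (by norm_num)) hK0, ?_⟩
  intro V x ξ hV hHess hx hξ hx0 hξ0 t ht
  obtain ⟨ht0, htT⟩ := ht
  have hexp : Real.exp (K * t) - 1 ≤ 1/2 := by
    have h1 : K * t ≤ Real.log (3/2) := by
      have := mul_le_mul_of_nonneg_left htT hK0.le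
      rwa [mul_div_cancel₀ _ hK0.ne'] at this
    have h2 : Real.exp (K * t) ≤ 3/2 := by
      calc Real.exp (K * t) ≤ Real.exp (Real.log (3/2)) := Real.exp_le_exp.2 h1
        _ = 3/2 := Real.exp_log (by norm_num)
    linarith
  -- Lipschitz bound for the gradient
  have hgrad : ∀ a b, ‖gradient V a - gradient V b‖ ≤ M * ‖a - b‖ := by
    intro a b
    have hd2 : ∀ z, ‖fderiv ℝ (fderiv ℝ V) z‖ ≤ M := by
      intro z
      have h1 : ‖iteratedFDeriv ℝ 1 (fderiv ℝ V) z‖ = ‖iteratedFDeriv ℝ 2 V z‖ :=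
        norm_iteratedFDeriv_fderiv
      have h2 : ‖fderiv ℝ (fderiv ℝ V) z‖ ≤ ‖iteratedFDeriv ℝ 1 (fderiv ℝ V) z‖ := by
        refine ContinuousLinearMap.opNorm_le_bound _ (norm_nonneg _) fun v => ?_
        have hv : fderiv ℝ (fderiv ℝ V) z v
            = iteratedFDeriv ℝ 1 (fderiv ℝ V) z (fun _ => v) := by
          rw [iteratedFDeriv_one_apply]
        rw [hv]
        calc ‖iteratedFDeriv ℝ 1 (fderiv ℝ V) z (fun _ => v)‖
            ≤ ‖iteratedFDeriv ℝ 1 (fderiv ℝ V) z‖ * ∏ i : Fin 1, ‖(fun _ : Fin 1 => v) i‖ :=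
              ContinuousMultilinearMap.le_opNorm _ _
          _ = ‖iteratedFDeriv ℝ 1 (fderiv ℝ V) z‖ * ‖v‖ := by simp
      exact h2.trans (h1 ▸ hHess z)
    have hdiff : Differentiable ℝ (fderiv ℝ V) :=
      (hV.fderiv_right (m := 1) (by exact WithTop.coe_le_coe.2 (le_top : ((1 + 1 : ℕ) : ℕ∞) ≤ ⊤))).differentiable one_ne_zero
    have hfd : ‖fderiv ℝ V a - fderiv ℝ V b‖ ≤ M * ‖a - b‖ :=
      convex_univ.norm_image_sub_le_of_norm_fderiv_le (fun z _ => hdiff z)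
        (fun z _ => hd2 z) (mem_univ b) (mem_univ a)
    have heq : gradient V a - gradient V b
        = (InnerProductSpace.toDual ℝ (EuclideanSpace ℝ (Fin d))).symm
            (fderiv ℝ V a - fderiv ℝ V b) := by
      simp [gradient, map_sub]
    rw [heq, LinearIsometryEquiv.norm_map]
    exact hfd
  -- Key contraction estimate
  have key : ∀ y y', ‖(x t y - y) - (x t y' - y')‖ ≤ (1/2) * ‖y - y'‖ := by
    intro y y'
    set F : ℝ → (EuclideanSpace ℝ (Fin d)) × (EuclideanSpace ℝ (Fin d)) :=
      fun s => (x s y - x s y' - (y - y'), ξ s y - ξ s y') with hFdef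
    set F' : ℝ → (EuclideanSpace ℝ (Fin d)) × (EuclideanSpace ℝ (Fin d)) := fun s =>
      (ξ s y - ξ s y', -(gradient V (x s y)) - -(gradient V (x s y'))) with hF'def
    have hF' : ∀ s, HasDerivAt F (F' s) s := fun s =>
      ((((hx y s).sub (hx y' s)).sub_const (y - y'))).prodMk ((hξ y s).sub (hξ y' s))
    have hcont : ContinuousOn F (Icc 0 t) :=
      (continuous_iff_continuousAt.2 fun s => (hF' s).continuousAt).continuousOn
    have hF0 : ‖F 0‖ ≤ 0 := by
      simp [hFdef, hx0 y, hx0 y', hξ0 y, hξ0 y', Prod.norm_def]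
    have hbound : ∀ s ∈ Ico (0:ℝ) t, ‖F' s‖ ≤ K * ‖F s‖ + M * ‖y - y'‖ := by
      intro s _
      have hFs1 : ‖(F s).1‖ ≤ ‖F s‖ := norm_fst_le _
      have hFs2 : ‖(F s).2‖ ≤ ‖F s‖ := norm_snd_le _
      have hFnn : (0:ℝ) ≤ ‖F s‖ := norm_nonneg _
      have hynn : (0:ℝ) ≤ ‖y - y'‖ := norm_nonneg _
      rw [Prod.norm_def]
      refine max_le ?_ ?_
      · calc ‖(F' s).1‖ = ‖(F s).2‖ := rfl
          _ ≤ 1 * ‖F s‖ + 0 := by linarith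
          _ ≤ K * ‖F s‖ + M * ‖y - y'‖ := by nlinarith
      · have h1 : ‖(F' s).2‖ = ‖gradient V (x s y) - gradient V (x s y')‖ := by
          have : (F' s).2 = -(gradient V (x s y) - gradient V (x s y')) := by
            simp only [hF'def]; abel
          rw [this, norm_neg]
        have h2 : x s y - x s y' = (F s).1 + (y - y') := by
          simp only [hFdef]; abel
        have h3 : ‖x s y - x s y'‖ ≤ ‖(F s).1‖ + ‖y - y'‖ := by
          rw [h2]; exact norm_add_le _ _
        have h4 := hgrad (x s y) (x s y')
        rw [h1]
        calc ‖gradient V (x s y) - gradient V (x s y')‖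
            ≤ M * (‖(F s).1‖ + ‖y - y'‖) := h4.trans (by nlinarith)
          _ ≤ K * ‖F s‖ + M * ‖y - y'‖ := by nlinarith
    have hgb := norm_le_gronwallBound_of_norm_deriv_right_le hcont
      (fun s _ => (hF' s).hasDerivWithinAt) hF0 hbound t ⟨ht0, le_refl t⟩
    rw [gronwallBound_of_K_ne_0 hK0.ne'] at hgb
    have hgb2 : ‖F t‖ ≤ M / K * (Real.exp (K * t) - 1) * ‖y - y'‖ := by
      simp only [sub_zero] at hgb
      calc ‖F t‖ ≤ 0 * Real.exp (K * t) + M * ‖y - y'‖ / K * (Real.exp (K * t) - 1) := hgb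
        _ = M / K * (Real.exp (K * t) - 1) * ‖y - y'‖ := by ring
    have hMdK : M / K ≤ 1 := (div_le_one hK0).2 hMK
    have hexp0 : 0 ≤ Real.exp (K * t) - 1 := by
      have := Real.one_le_exp (by positivity : (0:ℝ) ≤ K * t); linarith
    have hynn : (0:ℝ) ≤ ‖y - y'‖ := norm_nonneg _
    have h5 : M / K * (Real.exp (K * t) - 1) ≤ 1/2 := by
      have h6 := mul_le_mul_of_nonneg_right hMdK hexp0
      linarith
    have hfinal : ‖F t‖ ≤ (1/2) * ‖y - y'‖ :=
      hgb2.trans (mul_le_mul_of_nonneg_right h5 hynn)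
    calc ‖(x t y - y) - (x t y' - y')‖ = ‖(F t).1‖ := by
          congr 1; simp only [hFdef]; abel
      _ ≤ ‖F t‖ := norm_fst_le _
      _ ≤ (1/2) * ‖y - y'‖ := hfinal
  constructor
  · -- injective
    intro y y' h
    simp only at h
    have hk := key y y'
    have hrw : (x t y - y) - (x t y' - y') = -(y - y') := by rw [h]; abel
    rw [hrw, norm_neg] at hk
    have hnn := norm_nonneg (y - y')
    have : ‖y - y'‖ = 0 := by linarith
    exact sub_eq_zero.1 (norm_eq_zero.1 this)
  · -- surjective
    intro z
    set φ : EuclideanSpace ℝ (Fin d) → EuclideanSpace ℝ (Fin d) :=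
      fun y => z - (x t y - y) with hφdef
    have hlip : LipschitzWith (1/2 : ℝ≥0) φ := by
      refine LipschitzWith.of_dist_le_mul fun a b => ?_
      have h1 : φ a - φ b = (x t b - b) - (x t a - a) := by simp only [hφdef]; abel
      rw [dist_eq_norm, dist_eq_norm, h1]
      have h2 := key b a
      calc ‖(x t b - b) - (x t a - a)‖ ≤ (1/2) * ‖b - a‖ := h2
        _ = ((1/2 : ℝ≥0) : ℝ) * ‖a - b‖ := by rw [norm_sub_rev a b]; norm_num
    have hc : ContractingWith (1/2 : ℝ≥0) φ := ⟨by rw [← NNReal.coe_lt_coe]; norm_num, hlip⟩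
    obtain ⟨y, hy, -⟩ := hc.exists_fixedPoint 0 (edist_ne_top _ _)
    refine ⟨y, ?_⟩
    have hy' : z - (x t y - y) = y := hy
    have h3 := sub_eq_iff_eq_add.1 hy'
    show x t y = z
    rw [h3]; abel
end

section
/- Let φ : [0,T]×ℝᵈ → ℝ be smooth, with φ(0,·) = 0 and satisfying the eikonal equation ∂_t φ + ½|∇φ|² + V = 0, where all space-derivatives of φ of order ≥ 2 are bounded by a constant K on [0,T]×ℝᵈ. Then for each x, the function g(t) = ∇φ(t,x) + t∇V(x) satisfies g(0) = 0 and |g'(t)| ≤ K(|g(t)| + t|∇V(x)|), and consequently |∇φ(t,x) + t∇V(x)| ≤ K e^{KT} t² |∇V(x)| for all t ∈ [0,T]. -/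
open ContinuousLinearMap

set_option maxHeartbeats 1000000

lemma stmt16_exp {u : ℝ} (_hu : 0 ≤ u) : Real.exp u - 1 ≤ u * Real.exp u := by
  have h1 := Real.add_one_le_exp (-u)
  have h2 : Real.exp (-u) * Real.exp u = 1 := by rw [← Real.exp_add]; simp
  nlinarith [Real.exp_pos u]

lemma stmt16_norm_comp {E F G : Type*} [NormedAddCommGroup E] [NormedAddCommGroup F]
    [NormedAddCommGroup G] [NormedSpace ℝ E] [NormedSpace ℝ F] [NormedSpace ℝ G]
    (iso : F ≃ₗᵢ[ℝ] G) (A : E →L[ℝ] F) : ‖(iso : F →L[ℝ] G).comp A‖ = ‖A‖ := by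
  apply le_antisymm
  · refine ContinuousLinearMap.opNorm_le_bound _ (norm_nonneg A) fun v => ?_
    simp only [ContinuousLinearMap.comp_apply]
    rw [show ((iso : F →L[ℝ] G) (A v)) = iso (A v) from rfl, iso.norm_map]
    exact A.le_opNorm v
  · refine ContinuousLinearMap.opNorm_le_bound _ (norm_nonneg _) fun v => ?_
    have h : ‖A v‖ = ‖((iso : F →L[ℝ] G).comp A) v‖ := by
      simp only [ContinuousLinearMap.comp_apply]
      rw [show ((iso : F →L[ℝ] G) (A v)) = iso (A v) from rfl, iso.norm_map]
    rw [h]; exact ContinuousLinearMap.le_opNorm _ v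

lemma stmt16_mixed {d : ℕ} (φ : ℝ → EuclideanSpace ℝ (Fin d) → ℝ)
    (hφ : ContDiff ℝ (⊤ : ℕ∞) (Function.uncurry φ)) (t : ℝ) (x : EuclideanSpace ℝ (Fin d)) :
    HasDerivAt (fun s => fderiv ℝ (φ s) x)
      (fderiv ℝ (fun y => deriv (fun s => φ s y) t) x) t := by
  have hdF : Differentiable ℝ (Function.uncurry φ) := hφ.differentiable (by simp)
  set F' := fderiv ℝ (Function.uncurry φ) with hF'def
  have hF's : ContDiff ℝ (⊤ : ℕ∞) F' := hφ.fderiv_right (by simp)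
  have hdF' : Differentiable ℝ F' := hF's.differentiable (by simp)
  have hsymm : ∀ p v w, fderiv ℝ F' p v w = fderiv ℝ F' p w v := fun p =>
    second_derivative_symmetric (fun y => (hdF y).hasFDerivAt) (hdF' p).hasFDerivAt
  set J : EuclideanSpace ℝ (Fin d) →L[ℝ] ℝ × EuclideanSpace ℝ (Fin d) :=
    (0 : EuclideanSpace ℝ (Fin d) →L[ℝ] ℝ).prod
      (ContinuousLinearMap.id ℝ (EuclideanSpace ℝ (Fin d))) with hJ
  have hw : ∀ s (y : EuclideanSpace ℝ (Fin d)),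
      HasFDerivAt (φ s) ((F' (s, y)).comp J) y := fun s y =>
    (hdF (s, y)).hasFDerivAt.comp y (HasFDerivAt.prodMk (hasFDerivAt_const s y) (hasFDerivAt_id y))
  have h3 : (fun s => fderiv ℝ (φ s) x) = fun s => (F' (s, x)).comp J :=
    funext fun s => (hw s x).fderiv
  have h1 : HasDerivAt (fun s => F' (s, x)) (fderiv ℝ F' (t, x) (1, 0)) t :=
    (hdF' (t, x)).hasFDerivAt.comp_hasDerivAt t
      (HasDerivAt.prodMk (hasDerivAt_id t) (hasDerivAt_const t x))
  have h2 : HasDerivAt (fun s => (F' (s, x)).comp J)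
      ((fderiv ℝ F' (t, x) (1, 0)).comp J) t := by
    have := ((compL ℝ (EuclideanSpace ℝ (Fin d)) (ℝ × EuclideanSpace ℝ (Fin d)) ℝ).flip
        J).hasFDerivAt.comp_hasDerivAt t h1
    exact this
  have hψ : ∀ y : EuclideanSpace ℝ (Fin d),
      HasDerivAt (fun s => φ s y) (F' (t, y) (1, 0)) t := fun y =>
    (hdF (t, y)).hasFDerivAt.comp_hasDerivAt (f := fun s => (s, y)) t
      (HasDerivAt.prodMk (hasDerivAt_id t) (hasDerivAt_const t y))
  have hψeq : (fun y : EuclideanSpace ℝ (Fin d) => deriv (fun s => φ s y) t)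
      = fun y => F' (t, y) (1, 0) := funext fun y => (hψ y).deriv
  have hRHS : HasFDerivAt
      (fun y : EuclideanSpace ℝ (Fin d) => F' (t, y) (1, 0))
      ((ContinuousLinearMap.apply ℝ ℝ ((1 : ℝ), (0 : EuclideanSpace ℝ (Fin d)))).comp
        ((fderiv ℝ F' (t, x)).comp J)) x :=
    (ContinuousLinearMap.apply ℝ ℝ ((1 : ℝ), (0 : EuclideanSpace ℝ (Fin d)))).hasFDerivAt.comp x
      ((hdF' (t, x)).hasFDerivAt.comp x (HasFDerivAt.prodMk (hasFDerivAt_const t x) (hasFDerivAt_id x)))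
  have heq : (fderiv ℝ F' (t, x) (1, 0)).comp J
      = (ContinuousLinearMap.apply ℝ ℝ ((1 : ℝ), (0 : EuclideanSpace ℝ (Fin d)))).comp
        ((fderiv ℝ F' (t, x)).comp J) := by
    ext v
    simp [hJ, hsymm (t, x) (1, 0) (0, v)]
  rw [h3, hψeq, hRHS.fderiv, ← heq]
  exact h2

theorem stmt_16 (d : ℕ) (T K : ℝ) (hT : 0 < T)
    (φ : ℝ → EuclideanSpace ℝ (Fin d) → ℝ)
    (V : EuclideanSpace ℝ (Fin d) → ℝ)
    (hφ : ContDiff ℝ (⊤ : ℕ∞) (Function.uncurry φ))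
    (hV : ContDiff ℝ (⊤ : ℕ∞) V)
    (h0 : ∀ x, φ 0 x = 0)
    (heik : ∀ t ∈ Set.Icc (0:ℝ) T, ∀ x,
      deriv (fun s => φ s x) t + (1/2) * ‖gradient (φ t) x‖ ^ 2 + V x = 0)
    (hK : ∀ n : ℕ, 2 ≤ n → ∀ t ∈ Set.Icc (0:ℝ) T, ∀ x,
      ‖iteratedFDeriv ℝ n (φ t) x‖ ≤ K) :
    ∀ x, (gradient (φ 0) x + (0:ℝ) • gradient V x = 0) ∧
      (∀ t ∈ Set.Icc (0:ℝ) T,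
        ‖deriv (fun s => gradient (φ s) x + s • gradient V x) t‖
          ≤ K * (‖gradient (φ t) x + t • gradient V x‖ + t * ‖gradient V x‖)) ∧
      ∀ t ∈ Set.Icc (0:ℝ) T,
        ‖gradient (φ t) x + t • gradient V x‖
          ≤ K * Real.exp (K * T) * t ^ 2 * ‖gradient V x‖ := by
  intro x
  have hK0 : 0 ≤ K :=
    le_trans (norm_nonneg _) (hK 2 le_rfl 0 ⟨le_rfl, hT.le⟩ x)
  have hφt : ∀ t, ContDiff ℝ (⊤ : ℕ∞) (φ t) := fun t =>
    hφ.comp (ContDiff.prodMk (contDiff_const (c := t)) contDiff_id)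
  set L := InnerProductSpace.toDual ℝ (EuclideanSpace ℝ (Fin d)) with hL
  have hgrad : ∀ t, gradient (φ t) = fun y => L.symm (fderiv ℝ (φ t) y) := fun t => rfl
  have hgradsm : ∀ t, ContDiff ℝ (⊤ : ℕ∞) (gradient (φ t)) := fun t => by
    rw [hgrad t]
    exact L.symm.contDiff.comp ((hφt t).fderiv_right (by simp))
  set g : ℝ → EuclideanSpace ℝ (Fin d) :=
    fun s => gradient (φ s) x + s • gradient V x with hg
  -- derivative of g
  have hgderiv : ∀ t, HasDerivAt g
      (L.symm (fderiv ℝ (fun y => deriv (fun s => φ s y) t) x) + gradient V x) t := by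
    intro t
    have h1 := stmt16_mixed φ hφ t x
    have h2 : HasDerivAt (fun s => gradient (φ s) x)
        (L.symm (fderiv ℝ (fun y => deriv (fun s => φ s y) t) x)) t := by
      have h2' := (L.symm.toLinearIsometry.toContinuousLinearMap).hasFDerivAt.comp_hasDerivAt
        t h1
      exact h2'
    have h3 : HasDerivAt (fun s : ℝ => s • gradient V x) (gradient V x) t := by
      simpa using (hasDerivAt_id t).smul_const (gradient V x)
    exact h2.add h3
  -- Part 1
  have part1 : gradient (φ 0) x + (0:ℝ) • gradient V x = 0 := by
    rw [show φ 0 = (fun _ => (0:ℝ)) from funext h0]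
    simp [gradient_const]
  -- Part 2
  have part2 : ∀ t ∈ Set.Icc (0:ℝ) T,
      ‖deriv g t‖ ≤ K * (‖g t‖ + t * ‖gradient V x‖) := by
    intro t ht
    set u := gradient (φ t) with hu
    have hud : HasFDerivAt u (fderiv ℝ u x) x :=
      (((hgradsm t).differentiable (by simp)) x).hasFDerivAt
    set u' := fderiv ℝ u x with hu'
    have hq : HasFDerivAt (fun y => ‖u y‖ ^ 2)
        ((fderivInnerCLM ℝ (u x, u x)).comp (u'.prod u')) x := by
      have h := hud.inner ℝ hud
      have heqf : (fun y => (inner ℝ (u y) (u y) : ℝ)) = fun y => ‖u y‖ ^ 2 :=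
        funext fun y => real_inner_self_eq_norm_sq (u y)
      rwa [heqf] at h
    set q' : EuclideanSpace ℝ (Fin d) →L[ℝ] ℝ :=
      (fderivInnerCLM ℝ (u x, u x)).comp (u'.prod u') with hq'
    have hVd : HasFDerivAt V (fderiv ℝ V x) x := ((hV.differentiable (by simp)) x).hasFDerivAt
    have hψform : (fun y => deriv (fun s => φ s y) t)
        = fun y => -((1/2 : ℝ) * ‖u y‖ ^ 2 + V y) := by
      funext y
      have := heik t ht y
      rw [hu]
      linarith
    have hψd : HasFDerivAt (fun y => deriv (fun s => φ s y) t)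
        (-((1/2 : ℝ) • q' + fderiv ℝ V x)) x := by
      rw [hψform]
      exact ((hq.const_mul (1/2 : ℝ)).add hVd).neg
    have hder : deriv g t = -((1/2 : ℝ) • L.symm q') := by
      rw [(hgderiv t).deriv, hψd.fderiv]
      have hv : L.symm (fderiv ℝ V x) = gradient V x := rfl
      rw [map_neg, map_add, map_smul, hv]
      abel
    -- norm bounds
    have hq'bound : ‖q'‖ ≤ 2 * (‖u'‖ * ‖u x‖) := by
      refine ContinuousLinearMap.opNorm_le_bound _ (by positivity) fun v => ?_
      have hqv : q' v = (inner ℝ (u x) (u' v) : ℝ) + (inner ℝ (u' v) (u x) : ℝ) := by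
        simp [hq', fderivInnerCLM_apply]
      rw [hqv]
      have h1 : |(inner ℝ (u x) (u' v) : ℝ)| ≤ ‖u x‖ * ‖u' v‖ := abs_real_inner_le_norm _ _
      have h2 : |(inner ℝ (u' v) (u x) : ℝ)| ≤ ‖u' v‖ * ‖u x‖ := abs_real_inner_le_norm _ _
      have h3 : ‖u' v‖ ≤ ‖u'‖ * ‖v‖ := u'.le_opNorm v
      have h4 : (0:ℝ) ≤ ‖u x‖ := norm_nonneg _
      have h5 : (0:ℝ) ≤ ‖v‖ := norm_nonneg _
      rw [Real.norm_eq_abs]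
      calc |(inner ℝ (u x) (u' v) : ℝ) + (inner ℝ (u' v) (u x) : ℝ)|
          ≤ |(inner ℝ (u x) (u' v) : ℝ)| + |(inner ℝ (u' v) (u x) : ℝ)| := abs_add_le _ _
        _ ≤ ‖u x‖ * ‖u' v‖ + ‖u' v‖ * ‖u x‖ := add_le_add h1 h2
        _ ≤ 2 * (‖u'‖ * ‖u x‖) * ‖v‖ := by nlinarith
    have hu'K : ‖u'‖ ≤ K := by
      have hueq : u = (⇑L.symm) ∘ (fderiv ℝ (φ t)) := rfl
      rw [hu', hueq, L.symm.comp_fderiv, stmt16_norm_comp L.symm]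
      calc ‖fderiv ℝ (fderiv ℝ (φ t)) x‖
          = ‖iteratedFDeriv ℝ 0 (fderiv ℝ (fderiv ℝ (φ t))) x‖ :=
            by rw [norm_iteratedFDeriv_zero]
        _ = ‖iteratedFDeriv ℝ 1 (fderiv ℝ (φ t)) x‖ := norm_iteratedFDeriv_fderiv
        _ = ‖iteratedFDeriv ℝ 2 (φ t) x‖ := norm_iteratedFDeriv_fderiv
        _ ≤ K := hK 2 le_rfl t ht x
    have hux : ‖u x‖ ≤ ‖g t‖ + t * ‖gradient V x‖ := by
      have hrepr : u x = g t - t • gradient V x := by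
        rw [hg, hu]; module
      rw [hrepr]
      refine (norm_sub_le _ _).trans ?_
      rw [norm_smul, Real.norm_eq_abs, abs_of_nonneg ht.1]
    rw [hder]
    rw [norm_neg, norm_smul, L.symm.norm_map]
    have h6 : (0:ℝ) ≤ ‖u x‖ := norm_nonneg _
    have h7 : (0:ℝ) ≤ ‖u'‖ := norm_nonneg _
    calc ‖(1/2 : ℝ)‖ * ‖q'‖ ≤ (1/2) * (2 * (‖u'‖ * ‖u x‖)) := by
          rw [show ‖(1/2:ℝ)‖ = (1/2:ℝ) by norm_num]
          nlinarith
      _ = ‖u'‖ * ‖u x‖ := by ring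
      _ ≤ K * (‖g t‖ + t * ‖gradient V x‖) := by
          refine mul_le_mul hu'K hux h6 hK0
  -- Part 3
  refine ⟨part1, part2, ?_⟩
  intro t ht
  obtain ⟨ht0, htT⟩ := ht
  have hcont : ContinuousOn g (Set.Icc 0 t) := fun s _ =>
    ((hgderiv s).continuousAt).continuousWithinAt
  have hg0 : ‖g 0‖ ≤ 0 := by
    have hz : g 0 = 0 := by simp only [hg]; exact part1
    simp [hz]
  have hbound : ∀ s ∈ Set.Ico (0:ℝ) t,
      ‖deriv g s‖ ≤ K * ‖g s‖ + K * t * ‖gradient V x‖ := by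
    intro s hs
    have h2 := part2 s ⟨hs.1, hs.2.le.trans htT⟩
    have hVn : (0:ℝ) ≤ ‖gradient V x‖ := norm_nonneg _
    have hmono : K * (s * ‖gradient V x‖) ≤ K * (t * ‖gradient V x‖) :=
      mul_le_mul_of_nonneg_left (mul_le_mul_of_nonneg_right hs.2.le hVn) hK0
    calc ‖deriv g s‖ ≤ K * (‖g s‖ + s * ‖gradient V x‖) := h2
      _ = K * ‖g s‖ + K * (s * ‖gradient V x‖) := by ring
      _ ≤ K * ‖g s‖ + K * (t * ‖gradient V x‖) := by linarith
      _ = K * ‖g s‖ + K * t * ‖gradient V x‖ := by ring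
  have hgr := norm_le_gronwallBound_of_norm_deriv_right_le hcont
    (fun s _ => ((hgderiv s).differentiableAt.hasDerivAt).hasDerivWithinAt)
    hg0 hbound t ⟨ht0, le_rfl⟩
  rcases eq_or_ne K 0 with hKz | hKne
  · rw [hKz] at hgr ⊢
    rw [gronwallBound_K0] at hgr
    simp only [zero_mul, mul_zero, zero_add] at hgr ⊢
    simpa using hgr
  · rw [gronwallBound_of_K_ne_0 hKne] at hgr
    simp only [sub_zero] at hgr
    have hKpos : 0 < K := lt_of_le_of_ne hK0 (Ne.symm hKne)
    have hVn : (0:ℝ) ≤ ‖gradient V x‖ := norm_nonneg _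
    have hsimp : (0:ℝ) * Real.exp (K * t)
        + K * t * ‖gradient V x‖ / K * (Real.exp (K * t) - 1)
        = t * ‖gradient V x‖ * (Real.exp (K * t) - 1) := by
      field_simp
      ring
    rw [hsimp] at hgr
    refine hgr.trans ?_
    have he1 : Real.exp (K * t) - 1 ≤ (K * t) * Real.exp (K * t) :=
      stmt16_exp (by positivity)
    have he2 : Real.exp (K * t) ≤ Real.exp (K * T) :=
      Real.exp_le_exp.2 (mul_le_mul_of_nonneg_left htT hK0)
    have hexp_pos := Real.exp_pos (K * t)
    have h1 : Real.exp (K * t) - 1 ≤ (K * t) * Real.exp (K * T) := by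
      have := mul_le_mul_of_nonneg_left he2 (show (0:ℝ) ≤ K * t by positivity)
      linarith
    calc t * ‖gradient V x‖ * (Real.exp (K * t) - 1)
        ≤ t * ‖gradient V x‖ * ((K * t) * Real.exp (K * T)) :=
          mul_le_mul_of_nonneg_left h1 (by positivity)
      _ = K * Real.exp (K * T) * t ^ 2 * ‖gradient V x‖ := by ring
end
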